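/- Let D and D' be division rings, let m, n, m', n' ≥ 2 be integers, and let φ : D^{m×n} → D'^{m'×n'} be a graph homomorphism with φ(0) = 0. Let A, B ∈ D^{m×n}. If A ≤ B in the minus partial order and rank(φ(B)) = rank(B), then φ(A) ≤ φ(B) and rank(φ(A)) = rank(A). -/

import Mathlib

open Matrix Function

/-- The rank of a matrix over a division ring: the dimension of its left row space. -/
noncomputable def rk {D : Type*} [DivisionRing D] {m n : ℕ}
    (A : Matrix (Fin m) (Fin n) D) : ℕ :=
  Module.finrank D (Submodule.span D (Set.range fun i => A i))

/-- A nonempty set of matrices, any two distinct members of which are adjacent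
(`rk (A - B) = 1`). -/
def IsAdjSet {D : Type*} [DivisionRing D] {m n : ℕ}
    (S : Set (Matrix (Fin m) (Fin n) D)) : Prop :=
  S.Nonempty ∧ ∀ A ∈ S, ∀ B ∈ S, A ≠ B → rk (A - B) = 1

/-- A maximal set: an adjacent set which is maximal under inclusion. -/
def IsMaxSet {D : Type*} [DivisionRing D] {m n : ℕ}
    (S : Set (Matrix (Fin m) (Fin n) D)) : Prop :=
  IsAdjSet S ∧ ∀ T : Set (Matrix (Fin m) (Fin n) D), IsAdjSet T → S ⊆ T → T = S

/-- `M₁`: matrices whose rows other than the first are zero. -/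
def M1set (D : Type*) [DivisionRing D] (m n : ℕ) : Set (Matrix (Fin m) (Fin n) D) :=
  {X | ∀ (i : Fin m) (j : Fin n), (i : ℕ) ≠ 0 → X i j = 0}

/-- `N₁`: matrices whose columns other than the first are zero. -/
def N1set (D : Type*) [DivisionRing D] (m n : ℕ) : Set (Matrix (Fin m) (Fin n) D) :=
  {X | ∀ (i : Fin m) (j : Fin n), (j : ℕ) ≠ 0 → X i j = 0}

/-- A maximal set of type one: `P·M₁ + A` with `P` invertible. -/
def IsTypeOne {D : Type*} [DivisionRing D] {m n : ℕ}
    (S : Set (Matrix (Fin m) (Fin n) D)) : Prop :=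
  ∃ (P : Matrix (Fin m) (Fin m) D) (A : Matrix (Fin m) (Fin n) D),
    IsUnit P ∧ S = (fun X => P * X + A) '' M1set D m n

/-- A maximal set of type two: `N₁·Q + A` with `Q` invertible. -/
def IsTypeTwo {D : Type*} [DivisionRing D] {m n : ℕ}
    (S : Set (Matrix (Fin m) (Fin n) D)) : Prop :=
  ∃ (Q : Matrix (Fin n) (Fin n) D) (A : Matrix (Fin m) (Fin n) D),
    IsUnit Q ∧ S = (fun X => X * Q + A) '' N1set D m n

/-- Two maximal sets of different types. -/
def DiffTypes {D : Type*} [DivisionRing D] {m n : ℕ}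
    (M N : Set (Matrix (Fin m) (Fin n) D)) : Prop :=
  (IsTypeOne M ∧ IsTypeTwo N) ∨ (IsTypeTwo M ∧ IsTypeOne N)

/-- The unit ball `B_A = D^{m×n}_{≤1} + A`. -/
def uball {D : Type*} [DivisionRing D] {m n : ℕ}
    (A : Matrix (Fin m) (Fin n) D) : Set (Matrix (Fin m) (Fin n) D) :=
  {X | rk (X - A) ≤ 1}

/-- A graph homomorphism: adjacency-preserving map. -/
def IsGraphHom {D D' : Type*} [DivisionRing D] [DivisionRing D'] {m n m' n' : ℕ}
    (φ : Matrix (Fin m) (Fin n) D → Matrix (Fin m') (Fin n') D') : Prop :=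
  ∀ A B, rk (A - B) = 1 → rk (φ A - φ B) = 1

/-- A degenerate graph homomorphism. -/
def Degenerate {D D' : Type*} [DivisionRing D] [DivisionRing D'] {m n m' n' : ℕ}
    (φ : Matrix (Fin m) (Fin n) D → Matrix (Fin m') (Fin n') D') : Prop :=
  ∃ (A : Matrix (Fin m) (Fin n) D) (M N : Set (Matrix (Fin m') (Fin n') D')),
    rk A ≤ 1 ∧ DiffTypes M N ∧ φ '' uball A ⊆ M ∪ N ∧ φ A ∈ M ∩ N

/-- A (vertex) colouring: the image is an adjacent set. -/
def IsColouring {D D' : Type*} [DivisionRing D] [DivisionRing D'] {m n m' n' : ℕ}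
    (φ : Matrix (Fin m) (Fin n) D → Matrix (Fin m') (Fin n') D') : Prop :=
  IsAdjSet (Set.range φ)

/-- A nonzero ring homomorphism. -/
def IsRingHomNZ {D D' : Type*} [DivisionRing D] [DivisionRing D'] (τ : D → D') : Prop :=
  (∀ x y, τ (x + y) = τ x + τ y) ∧ (∀ x y, τ (x * y) = τ x * τ y) ∧ τ ≠ 0

/-- A nonzero ring anti-homomorphism. -/
def IsAntiRingHomNZ {D D' : Type*} [DivisionRing D] [DivisionRing D'] (σ : D → D') : Prop :=
  (∀ x y, σ (x + y) = σ x + σ y) ∧ (∀ x y, σ (x * y) = σ y * σ x) ∧ σ ≠ 0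

/-- The `m × n` matrix with the matrix `Y` in the upper-left corner and zeros elsewhere. -/
def corner {D : Type*} [Zero D] {k l m n : ℕ} (Y : Matrix (Fin k) (Fin l) D) :
    Matrix (Fin m) (Fin n) D :=
  Matrix.of fun i j =>
    if hi : (i : ℕ) < k then if hj : (j : ℕ) < l then Y ⟨i, hi⟩ ⟨j, hj⟩ else 0 else 0

/-- A line of the affine geometry `AG(M)` of a maximal set `M`: a nonempty intersection
`M ∩ N` with `N` a maximal set of the other type. -/
def IsLine {D : Type*} [DivisionRing D] {m n : ℕ}
    (M ℓ : Set (Matrix (Fin m) (Fin n) D)) : Prop :=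
  ∃ N : Set (Matrix (Fin m) (Fin n) D), DiffTypes M N ∧ (M ∩ N).Nonempty ∧ ℓ = M ∩ N

/-- Condition (I). -/
def CondI {D D' : Type*} [DivisionRing D] [DivisionRing D'] {m n m' n' : ℕ}
    (φ : Matrix (Fin m) (Fin n) D → Matrix (Fin m') (Fin n') D') : Prop :=
  ∀ M N : Set (Matrix (Fin m) (Fin n) D), DiffTypes M N → (0 : Matrix (Fin m) (Fin n) D) ∈ M ∩ N →
    ∃ M' N' : Set (Matrix (Fin m') (Fin n') D'),
      DiffTypes M' N' ∧ φ '' M ⊆ M' ∧ φ '' N ⊆ N'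

/-- Condition (i) of the additive homomorphism theorem: `φ(X) = P X^τ Q`. -/
def Cond1 {D D' : Type*} [DivisionRing D] [DivisionRing D'] {m n m' n' : ℕ}
    (φ : Matrix (Fin m) (Fin n) D → Matrix (Fin m') (Fin n') D') : Prop :=
  ∃ (P : Matrix (Fin m') (Fin m) D') (Q : Matrix (Fin n) (Fin n') D') (τ : D → D'),
    2 ≤ rk P ∧ 2 ≤ rk Q ∧ IsRingHomNZ τ ∧ ∀ X, φ X = P * X.map τ * Q

/-- Condition (ii) of the additive homomorphism theorem: `φ(X) = P (ᵗX^σ) Q`. -/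
def Cond2 {D D' : Type*} [DivisionRing D] [DivisionRing D'] {m n m' n' : ℕ}
    (φ : Matrix (Fin m) (Fin n) D → Matrix (Fin m') (Fin n') D') : Prop :=
  ∃ (P : Matrix (Fin m') (Fin n) D') (Q : Matrix (Fin m) (Fin n') D') (σ : D → D'),
    2 ≤ rk P ∧ 2 ≤ rk Q ∧ IsAntiRingHomNZ σ ∧ ∀ X, φ X = P * (X.map σ)ᵀ * Q

/-!
A graph homomorphism `φ` is `1`-Lipschitz for the rank distance: a matrix of rank `d + 1` is
the sum of a matrix of rank at most `1` and one of rank at most `d`, so `X` and `Y` are joined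
by a path of `rk (X - Y)` adjacency steps, and `φ` maps it to a path of the same length.
With `φ 0 = 0` this gives `rk (φ B - φ A) ≤ rk (B - A)` and `rk (φ A) ≤ rk A`, and
subadditivity of the rank squeezes
`rk (φ B) ≤ rk (φ B - φ A) + rk (φ A) ≤ rk (B - A) + rk A = rk B = rk (φ B)` into equalities.
-/

section Rank

variable {D : Type*} [DivisionRing D] {m n : ℕ}

lemma rk_eq_zero_iff {C : Matrix (Fin m) (Fin n) D} : rk C = 0 ↔ C = 0 := by
  rw [rk, Submodule.finrank_eq_zero, Submodule.span_eq_bot, Set.forall_mem_range]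
  exact ⟨fun h => funext h, fun h i => congrFun h i⟩

lemma rk_add_le (X Y : Matrix (Fin m) (Fin n) D) : rk (X + Y) ≤ rk X + rk Y := by
  refine le_trans (Submodule.finrank_mono ?_) (Submodule.finrank_add_le_finrank_add_finrank _ _)
  rw [Submodule.span_le]
  rintro _ ⟨i, rfl⟩
  exact Submodule.add_mem_sup (Submodule.subset_span ⟨i, rfl⟩) (Submodule.subset_span ⟨i, rfl⟩)

lemma rk_le_rk_sub_add_rk (X Y : Matrix (Fin m) (Fin n) D) : rk X ≤ rk (X - Y) + rk Y := by
  simpa using rk_add_le (X - Y) Y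

lemma rk_sub_le_rk_sub_add_rk_sub (X Y Z : Matrix (Fin m) (Fin n) D) :
    rk (X - Z) ≤ rk (X - Y) + rk (Y - Z) := by
  simpa using rk_le_rk_sub_add_rk (X - Z) (Y - Z)

lemma rk_le_card_of_forall_mem_span {ι : Type*} [Fintype ι] {C : Matrix (Fin m) (Fin n) D}
    (v : ι → Fin n → D) (h : ∀ i, C i ∈ Submodule.span D (Set.range v)) :
    rk C ≤ Fintype.card ι := by
  refine le_trans (Submodule.finrank_mono ?_) (finrank_range_le_card v)
  rw [Submodule.span_le]
  rintro _ ⟨i, rfl⟩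
  exact h i

/-- Split off the last vector of a basis of the row space. -/
lemma exists_rk_sub_le_one_rk_le {C : Matrix (Fin m) (Fin n) D} {d : ℕ} (h : rk C = d + 1) :
    ∃ Z : Matrix (Fin m) (Fin n) D, rk (C - Z) ≤ 1 ∧ rk Z ≤ d := by
  set W := Submodule.span D (Set.range fun i => C i)
  let b : Module.Basis (Fin (d + 1)) D W := Module.finBasisOfFinrankEq D W h
  have hmem : ∀ i, C i ∈ W := fun i => Submodule.subset_span ⟨i, rfl⟩
  let c : Fin m → Fin (d + 1) → D := fun i => b.repr ⟨C i, hmem i⟩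
  have hrow : ∀ i, C i = ∑ k, c i k • (b k : Fin n → D) := fun i => by
    have h := congrArg W.subtype (b.sum_repr ⟨C i, hmem i⟩)
    simp only [map_sum, map_smul, Submodule.subtype_apply] at h
    exact h.symm
  let R : Matrix (Fin m) (Fin n) D := Matrix.of fun i => c i (Fin.last d) • (b (Fin.last d) : _)
  refine ⟨C - R, ?_, ?_⟩
  · rw [sub_sub_cancel]
    exact rk_le_card_of_forall_mem_span (fun _ : Unit => (b (Fin.last d) : _)) fun i =>
      Submodule.smul_mem _ _ (Submodule.subset_span ⟨(), rfl⟩)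
  · refine le_trans (rk_le_card_of_forall_mem_span (fun k : Fin d => (b k.castSucc : _)) ?_)
      (Fintype.card_fin d).le
    intro i
    have hsum : (C - R) i = ∑ k : Fin d, c i k.castSucc • (b k.castSucc : Fin n → D) := by
      change C i - R i = _
      rw [hrow i, Fin.sum_univ_castSucc]
      exact add_sub_cancel_right _ _
    rw [hsum]
    exact Submodule.sum_mem _ fun k _ => Submodule.smul_mem _ _ (Submodule.subset_span ⟨k, rfl⟩)

end Rank

namespace IsGraphHom

variable {D D' : Type*} [DivisionRing D] [DivisionRing D'] {m n m' n' : ℕ}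
  {φ : Matrix (Fin m) (Fin n) D → Matrix (Fin m') (Fin n') D'}

lemma rk_sub_le_one (hφ : IsGraphHom φ) {X Y : Matrix (Fin m) (Fin n) D}
    (h : rk (X - Y) ≤ 1) : rk (φ X - φ Y) ≤ 1 := by
  rcases Nat.le_one_iff_eq_zero_or_eq_one.mp h with h | h
  · rw [sub_eq_zero.mp (rk_eq_zero_iff.mp h), sub_self, rk_eq_zero_iff.mpr rfl]
    exact zero_le_one
  · exact (hφ X Y h).le

lemma rk_sub_le (hφ : IsGraphHom φ) (X Y : Matrix (Fin m) (Fin n) D) :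
    rk (φ X - φ Y) ≤ rk (X - Y) := by
  induction hd : rk (X - Y) using Nat.strong_induction_on generalizing X Y with
  | _ d ih =>
    rcases d with _ | d
    · rw [sub_eq_zero.mp (rk_eq_zero_iff.mp hd), sub_self, rk_eq_zero_iff.mpr rfl]
    obtain ⟨Z, hXYZ, hZ⟩ := exists_rk_sub_le_one_rk_le hd
    have hfar : rk (φ X - φ (Y + Z)) ≤ 1 := hφ.rk_sub_le_one (by rwa [← sub_sub])
    have hnear : rk (φ (Y + Z) - φ Y) ≤ d :=
      ih (rk Z) (by omega) (Y + Z) Y (by rw [add_sub_cancel_left]) |>.trans hZ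
    exact (rk_sub_le_rk_sub_add_rk_sub _ (φ (Y + Z)) _).trans (by omega)

end IsGraphHom

theorem stmt16_general {D D' : Type*} [DivisionRing D] [DivisionRing D'] {m n m' n' : ℕ}
    (φ : Matrix (Fin m) (Fin n) D → Matrix (Fin m') (Fin n') D')
    (hhom : IsGraphHom φ) (h0 : φ 0 = 0)
    (A B : Matrix (Fin m) (Fin n) D)
    (hAB : rk (B - A) + rk A = rk B)
    (hB : rk (φ B) = rk B) :
    (rk (φ B - φ A) + rk (φ A) = rk (φ B)) ∧ rk (φ A) = rk A := by
  have hBA : rk (φ B - φ A) ≤ rk (B - A) := hhom.rk_sub_le B A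
  have hA : rk (φ A) ≤ rk A := by simpa [h0] using hhom.rk_sub_le A 0
  have htri : rk (φ B) ≤ rk (φ B - φ A) + rk (φ A) := rk_le_rk_sub_add_rk (φ B) (φ A)
  omega

/-- (Corollary `mYR25HLLsad23`) a graph homomorphism with `φ(0) = 0`
preserves the minus order below rank-preserved points. The minus order `A ≤ B` is
expressed as `rk (B - A) + rk A = rk B`. -/
theorem stmt16 {D D' : Type*} [DivisionRing D] [DivisionRing D'] {m n m' n' : ℕ}
    (hm : 2 ≤ m) (hn : 2 ≤ n) (hm' : 2 ≤ m') (hn' : 2 ≤ n')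
    (φ : Matrix (Fin m) (Fin n) D → Matrix (Fin m') (Fin n') D')
    (hhom : IsGraphHom φ) (h0 : φ 0 = 0)
    (A B : Matrix (Fin m) (Fin n) D)
    (hAB : rk (B - A) + rk A = rk B)
    (hB : rk (φ B) = rk B) :
    (rk (φ B - φ A) + rk (φ A) = rk (φ B)) ∧ rk (φ A) = rk A :=
  stmt16_general φ hhom h0 A B hAB hB
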